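/- Equivalence of ensembles: let rho in (0,infinity)^2, let N_L in N^2 be a sequence with N_L / L -> rho as L -> infinity, and let mubar = Mbar(rho) be the unique maximizer in D_mu of mu -> rho·mu - p(mu). Then the specific relative entropy converges to zero: (1/L) * H(pi_{L,N_L} | nu^L_{mubar}) -> 0 as L -> infinity; equivalently, -(1/L) * log nu^L_{mubar}({eta : Sigma_L(eta) = N_L}) -> 0. -/

import Mathlib

/-!
Since `π_{L,N}` is `ν^L_μ̄` conditioned on `{Σ_L = N}`, the relative entropy `H(π_{L,N} | ν^L_μ̄)`
equals `-log ν^L_μ̄(Σ_L = N)`. This is nonnegative, so what is needed is a lower bound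
`ν^L_μ̄(Σ_L = N_L) ≥ exp(-o(L))`.

It comes from the method of types. Each configuration with occupation counts `c` (supported on a
finite set `S`) has probability `∏ ν(k)^{c_k}`, and there are `L! / ∏ c_k!` of them, so by
Stirling `-log ν^L(Σ_L = N) ≤ L · H(c/L | ν) + O(|S| log L)` whenever `∑ c_k k = N`.
To find good counts, restrict the single-site weight to a finite `S` and maximize
`ρ·μ - log z_S(μ)`: at the maximizer `μ_S` the tilted distribution `q` on `S` has mean exactly `ρ`,
and `H(q | ν_μ̄) = (ρ·μ_S - log z_S(μ_S)) - (ρ·μ̄ - p(μ̄))`. The maximizers stay in a compact set,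
and `μ̄` maximizes `ρ·μ - p(μ)` on the whole domain of `z` (tilt down into `D_μ`), so a Dini-type
compactness argument makes this `< ε` for `S` large. Rounding `L q` to integers with first moment
exactly `N_L` gives counts `c` with `c/L → q`.
-/

open Real Set Filter Topology

noncomputable section

/-- Euclidean norm `|k|` of a pair of naturals. -/
def knorm (k : ℕ × ℕ) : ℝ := Real.sqrt ((k.1 : ℝ) ^ 2 + (k.2 : ℝ) ^ 2)

/-- Dot product `μ·k` of a chemical potential with an occupation vector. -/
def dotNat (μ : ℝ × ℝ) (k : ℕ × ℕ) : ℝ := μ.1 * k.1 + μ.2 * k.2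

/-- Summand `w(k) exp(μ·k)` of the grand-canonical partition function. -/
def zsummand (w : ℕ × ℕ → ℝ) (μ : ℝ × ℝ) (k : ℕ × ℕ) : ℝ := w k * Real.exp (dotNat μ k)

/-- `dom z`: the set of `μ` where `z(μ) = ∑_k w(k) exp(μ·k)` is finite. -/
def domz (w : ℕ × ℕ → ℝ) : Set (ℝ × ℝ) := {μ | Summable (zsummand w μ)}

/-- `D_μ`: the set of `μ` where `∑_k k_i w(k) exp(μ·k)` is finite for `i = 1,2`. -/
def Dmu (w : ℕ × ℕ → ℝ) : Set (ℝ × ℝ) :=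
  {μ | Summable (fun k : ℕ × ℕ => (k.1 : ℝ) * zsummand w μ k) ∧
       Summable (fun k : ℕ × ℕ => (k.2 : ℝ) * zsummand w μ k)}

/-- `w` is exponentially bounded: `w(k) ≤ ξ^|k|` for some `ξ > 0`. -/
def ExpBounded (w : ℕ × ℕ → ℝ) : Prop := ∃ ξ : ℝ, 0 < ξ ∧ ∀ k : ℕ × ℕ, w k ≤ ξ ^ knorm k

/-- The grand-canonical partition function `z(μ)`. -/
def zfun (w : ℕ × ℕ → ℝ) (μ : ℝ × ℝ) : ℝ := ∑' k : ℕ × ℕ, zsummand w μ k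

/-- The pressure `p(μ) = log z(μ)`. -/
def press (w : ℕ × ℕ → ℝ) (μ : ℝ × ℝ) : ℝ := Real.log (zfun w μ)

/-- The single-site grand-canonical mass function `ν¹_μ(k) = w(k) exp(μ·k)/z(μ)`. -/
def nu1 (w : ℕ × ℕ → ℝ) (μ : ℝ × ℝ) (k : ℕ × ℕ) : ℝ := zsummand w μ k / zfun w μ

/-- Density of the first species `R₁(μ)`. -/
def R1 (w : ℕ × ℕ → ℝ) (μ : ℝ × ℝ) : ℝ := ∑' k : ℕ × ℕ, (k.1 : ℝ) * nu1 w μ k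

/-- Density of the second species `R₂(μ)`. -/
def R2 (w : ℕ × ℕ → ℝ) (μ : ℝ × ℝ) : ℝ := ∑' k : ℕ × ℕ, (k.2 : ℝ) * nu1 w μ k

/-- The density map `R(μ) = (R₁(μ), R₂(μ))`. -/
def Rmap (w : ℕ × ℕ → ℝ) (μ : ℝ × ℝ) : ℝ × ℝ := (R1 w μ, R2 w μ)

/-- Dot product of two real vectors. -/
def dotR (a b : ℝ × ℝ) : ℝ := a.1 * b.1 + a.2 * b.2

/-- Total particle numbers `Σ_L(η)` on the lattice `{1,…,L}`. -/
def SigmaL (L : ℕ) (η : Fin L → ℕ × ℕ) : ℕ × ℕ := ∑ x, η x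

/-- The stationary product weight `w^L(η) = ∏_x w(η(x))`. -/
def wprod (w : ℕ × ℕ → ℝ) (L : ℕ) (η : Fin L → ℕ × ℕ) : ℝ := ∏ x, w (η x)

/-- The canonical partition function `Z_{L,N}`. -/
def ZLN (w : ℕ × ℕ → ℝ) (L : ℕ) (N : ℕ × ℕ) : ℝ :=
  ∑' η : {η : Fin L → ℕ × ℕ // SigmaL L η = N}, wprod w L η.1

/-- The canonical measure `π_{L,N}`. -/
def piLN (w : ℕ × ℕ → ℝ) (L : ℕ) (N : ℕ × ℕ) (η : Fin L → ℕ × ℕ) : ℝ :=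
  if SigmaL L η = N then wprod w L η / ZLN w L N else 0

/-- The grand-canonical product measure `ν^L_μ`. -/
def nuL (w : ℕ × ℕ → ℝ) (μ : ℝ × ℝ) (L : ℕ) (η : Fin L → ℕ × ℕ) : ℝ :=
  (∏ x, (w (η x) * Real.exp (dotNat μ (η x)))) / (zfun w μ) ^ L

/-- Relative entropy `H(π_{L,N} | ν^L_μ)`. -/
def relEnt (w : ℕ × ℕ → ℝ) (μ : ℝ × ℝ) (L : ℕ) (N : ℕ × ℕ) : ℝ :=
  ∑' η : Fin L → ℕ × ℕ, piLN w L N η * Real.log (piLN w L N η / nuL w μ L η)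

/-- The grand-canonical probability `ν^L_μ({Σ_L = N})`. -/
def nuProb (w : ℕ × ℕ → ℝ) (μ : ℝ × ℝ) (L : ℕ) (N : ℕ × ℕ) : ℝ :=
  ∑' η : {η : Fin L → ℕ × ℕ // SigmaL L η = N}, nuL w μ L η.1

/-- The restriction of a weight on `[0,∞)²` to `ℕ²`. -/
def wN (w : ℝ × ℝ → ℝ) (k : ℕ × ℕ) : ℝ := w ((k.1 : ℝ), (k.2 : ℝ))

/-- Regularity of the exponential tail of `w`: for every direction `φ ∈ [0,π/2]` the radial
exponential growth rate exists and is continuous in `φ`. -/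
def RegularTail (w : ℝ × ℝ → ℝ) : Prop :=
  ∃ ℓ : ℝ → ℝ, ContinuousOn ℓ (Icc 0 (π / 2)) ∧
    ∀ φ ∈ Icc (0 : ℝ) (π / 2),
      Tendsto (fun r : ℝ => Real.log (w (r * Real.cos φ, r * Real.sin φ)) / r) atTop (𝓝 (ℓ φ))

open scoped Nat

@[to_additive]
lemma prod_comp_eq_prod_pow_card_fiber {α ι M : Type*} [Fintype α] [Fintype ι] [DecidableEq ι]
    [CommMonoid M] (τ : α → ι) (f : ι → M) :
    ∏ x, f (τ x) = ∏ i, f i ^ Fintype.card {x // τ x = i} := by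
  rw [← Finset.prod_fiberwise Finset.univ τ]
  refine Finset.prod_congr rfl fun i _ => ?_
  rw [Finset.prod_congr rfl fun x hx => by rw [(Finset.mem_filter.1 hx).2], Finset.prod_const,
    Fintype.card_subtype]

lemma exists_card_fiber_eq {ι : Type*} [Fintype ι] [DecidableEq ι] (c : ι → ℕ) {L : ℕ}
    (hc : ∑ i, c i = L) :
    ∃ τ : Fin L → ι, ∀ i, Fintype.card {x // τ x = i} = c i := by
  have hcard : Fintype.card (Σ i, Fin (c i)) = L := by simp [hc]
  let e : Fin L ≃ Σ i, Fin (c i) := (Fintype.equivFinOfCardEq hcard).symm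
  refine ⟨fun x => (e x).1, fun i => ?_⟩
  exact (Fintype.card_congr ((e.subtypeEquiv (q := fun p => p.1 = i) fun _ => Iff.rfl).trans
    (Equiv.sigmaSubtype i))).trans (Fintype.card_fin _)

lemma card_image_comp_perm_mul_prod_factorial {α ι : Type*} [Fintype α] [DecidableEq α]
    [Fintype ι] [DecidableEq ι] (τ : α → ι) :
    (Finset.univ.image fun σ : Equiv.Perm α => τ ∘ σ).card * ∏ i, (Fintype.card {x // τ x = i})! =
      (Fintype.card α)! := by
  have h := Finset.card_eq_sum_card_image (fun σ : Equiv.Perm α => τ ∘ σ) Finset.univ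
  rw [Finset.card_univ, Fintype.card_perm, Finset.sum_const_nat] at h
  · rw [← DomMulAct.stabilizer_card τ, h]
  rintro _ hτ'
  obtain ⟨σ₀, -, rfl⟩ := Finset.mem_image.1 hτ'
  rw [Fintype.card_subtype]
  refine Finset.card_bij' (fun σ _ => σ * σ₀⁻¹) (fun g _ => g * σ₀) ?_ ?_ ?_ ?_
  · intro σ hσ
    simp only [Finset.mem_filter, Finset.mem_univ, true_and] at hσ ⊢
    ext x
    simpa using congrFun hσ (σ₀⁻¹ x)
  · intro g hg
    simp only [Finset.mem_filter, Finset.mem_univ, true_and] at hg ⊢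
    ext x
    simpa using congrFun hg (σ₀ x)
  · intro σ _; simp
  · intro g _; simp

lemma self_mul_log_sub_self_le_log_factorial (n : ℕ) : n * log n - n ≤ log (n ! : ℝ) := by
  rcases n.eq_zero_or_pos with rfl | hn
  · simp
  have h := pow_div_factorial_le_exp (n : ℝ) n.cast_nonneg n
  rw [← log_le_iff_le_exp (by positivity), log_div (by positivity) (by positivity),
    log_pow] at h
  linarith

lemma log_factorial_le (n : ℕ) : log (n ! : ℝ) ≤ n * log n - n + log n / 2 + 1 := by
  rcases n with _ | m
  · simp
  have h := Stirling.log_stirlingSeq'_antitone (Nat.zero_le m)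
  simp only [Function.comp_apply, Nat.succ_eq_add_one, zero_add, Stirling.stirlingSeq_one,
    Stirling.log_stirlingSeq_formula] at h
  have hm : (0 : ℝ) < (m + 1 : ℕ) := by positivity
  rw [log_div (exp_pos 1).ne' (by positivity), log_exp, log_sqrt zero_le_two,
    log_mul two_ne_zero hm.ne', log_div hm.ne' (exp_pos 1).ne', log_exp] at h
  linarith

lemma log_multinomial_ge {ι : Type*} (S : Finset ι) (c : ι → ℕ) {L : ℕ}
    (hc : ∑ i ∈ S, c i = L) :
    L * log L - ∑ i ∈ S, c i * log (c i) - S.card * (1 + log L) ≤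
      log (Nat.multinomial S c : ℝ) := by
  have hspec : log (L ! : ℝ) = ∑ i ∈ S, log ((c i)! : ℝ) + log (Nat.multinomial S c : ℝ) := by
    rw [← hc, ← Nat.multinomial_spec S c, Nat.cast_mul,
      log_mul (Nat.cast_ne_zero.2 (Finset.prod_ne_zero_iff.2 fun i _ => by positivity))
        (Nat.cast_ne_zero.2 (Nat.multinomial_pos S c).ne'),
      Nat.cast_prod, log_prod (fun i _ => by positivity)]
  have hfac : ∀ i ∈ S, log ((c i)! : ℝ) ≤ c i * log (c i) - c i + (1 + log L) := by
    intro i hi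
    have hci : c i ≤ L := hc ▸ Finset.single_le_sum (fun _ _ => Nat.zero_le _) hi
    have hlog : log (c i : ℝ) ≤ log L := by
      rcases (c i).eq_zero_or_pos with h0 | hpos
      · simp [h0, Real.log_natCast_nonneg]
      · exact log_le_log (by positivity) (by exact_mod_cast hci)
    linarith [log_factorial_le (c i), Real.log_natCast_nonneg (c i)]
  have hsum := Finset.sum_le_sum hfac
  rw [Finset.sum_add_distrib, Finset.sum_sub_distrib, Finset.sum_const, nsmul_eq_mul,
    ← Nat.cast_sum, hc] at hsum
  linarith [self_mul_log_sub_self_le_log_factorial L]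

lemma zsummand_pos {a : ℕ × ℕ → ℝ} (ha : ∀ k, 0 < a k) (μ : ℝ × ℝ) (k : ℕ × ℕ) :
    0 < zsummand a μ k :=
  mul_pos (ha k) (exp_pos _)

lemma zfun_pos {a : ℕ × ℕ → ℝ} (ha : ∀ k, 0 < a k) {μ : ℝ × ℝ}
    (hμ : Summable (zsummand a μ)) : 0 < zfun a μ :=
  hμ.tsum_pos (fun k => (zsummand_pos ha μ k).le) (0, 0) (zsummand_pos ha μ (0, 0))

lemma nu1_nonneg {a : ℕ × ℕ → ℝ} (ha : ∀ k, 0 ≤ a k) (μ : ℝ × ℝ) (k : ℕ × ℕ) :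
    0 ≤ nu1 a μ k :=
  div_nonneg (mul_nonneg (ha k) (exp_pos _).le)
    (tsum_nonneg fun k => mul_nonneg (ha k) (exp_pos _).le)

lemma nu1_pos {a : ℕ × ℕ → ℝ} (ha : ∀ k, 0 < a k) {μ : ℝ × ℝ}
    (hμ : Summable (zsummand a μ)) (k : ℕ × ℕ) : 0 < nu1 a μ k :=
  div_pos (zsummand_pos ha μ k) (zfun_pos ha hμ)

lemma summable_zsummand_of_mem_Dmu {a : ℕ × ℕ → ℝ} (ha : ∀ k, 0 ≤ a k) {μ : ℝ × ℝ}
    (hμ : μ ∈ Dmu a) : Summable (zsummand a μ) := by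
  refine (Finset.summable_compl_iff {(0, 0)}).1 ?_
  refine Summable.of_nonneg_of_le (fun k => mul_nonneg (ha _) (exp_pos _).le) (fun k => ?_)
    ((hμ.1.add hμ.2).subtype _)
  obtain ⟨⟨k₁, k₂⟩, hk⟩ := k
  have hk₁₂ : (1 : ℝ) ≤ k₁ + k₂ := by
    simp only [Finset.mem_singleton, Prod.mk.injEq, not_and_or] at hk
    norm_cast
    omega
  show zsummand a μ (k₁, k₂) ≤ k₁ * zsummand a μ (k₁, k₂) + k₂ * zsummand a μ (k₁, k₂)
  rw [← add_mul]
  exact le_mul_of_one_le_left (mul_nonneg (ha _) (exp_pos _).le) hk₁₂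

lemma le_SigmaL {L : ℕ} (η : Fin L → ℕ × ℕ) (x : Fin L) : η x ≤ SigmaL L η :=
  Finset.single_le_sum (fun _ _ => zero_le) (Finset.mem_univ x)

lemma dotNat_SigmaL (μ : ℝ × ℝ) {L : ℕ} (η : Fin L → ℕ × ℕ) :
    dotNat μ (SigmaL L η) = ∑ x, dotNat μ (η x) := by
  simp only [dotNat, SigmaL, Prod.fst_sum, Prod.snd_sum, Nat.cast_sum, Finset.mul_sum,
    Finset.sum_add_distrib]

def eventFinset (L : ℕ) (N : ℕ × ℕ) : Finset (Fin L → ℕ × ℕ) :=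
  {η ∈ Fintype.piFinset fun _ => Finset.Iic N | SigmaL L η = N}

lemma mem_eventFinset {L : ℕ} {N : ℕ × ℕ} {η : Fin L → ℕ × ℕ} :
    η ∈ eventFinset L N ↔ SigmaL L η = N := by
  simp only [eventFinset, Finset.mem_filter, Fintype.mem_piFinset, Finset.mem_Iic,
    and_iff_right_iff_imp]
  rintro rfl x
  exact le_SigmaL η x

lemma tsum_SigmaL_eq_sum {L : ℕ} {N : ℕ × ℕ} (f : (Fin L → ℕ × ℕ) → ℝ) :
    ∑' η : {η : Fin L → ℕ × ℕ // SigmaL L η = N}, f η = ∑ η ∈ eventFinset L N, f η := by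
  rw [← Finset.tsum_subtype]
  exact (Equiv.subtypeEquivRight fun η => mem_eventFinset.symm).tsum_eq fun η => f η.1

lemma nuL_eq_prod_nu1 (a : ℕ × ℕ → ℝ) (μ : ℝ × ℝ) {L : ℕ} (η : Fin L → ℕ × ℕ) :
    nuL a μ L η = ∏ x, nu1 a μ (η x) := by
  simp only [nuL, nu1, zsummand, Finset.prod_div_distrib, Finset.prod_const, Finset.card_univ,
    Fintype.card_fin]

lemma nuL_eq_of_SigmaL_eq (a : ℕ × ℕ → ℝ) (μ : ℝ × ℝ) {L : ℕ} {N : ℕ × ℕ}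
    {η : Fin L → ℕ × ℕ} (h : SigmaL L η = N) :
    nuL a μ L η = wprod a L η * exp (dotNat μ N) / zfun a μ ^ L := by
  rw [nuL, Finset.prod_mul_distrib, ← exp_sum, ← h, dotNat_SigmaL, wprod]

lemma nuProb_eq (a : ℕ × ℕ → ℝ) (μ : ℝ × ℝ) (L : ℕ) (N : ℕ × ℕ) :
    nuProb a μ L N = ZLN a L N * exp (dotNat μ N) / zfun a μ ^ L := by
  rw [nuProb, ZLN, ← tsum_mul_right, ← tsum_div_const]
  exact tsum_congr fun η => nuL_eq_of_SigmaL_eq a μ η.2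

lemma ZLN_pos {a : ℕ × ℕ → ℝ} (ha : ∀ k, 0 < a k) {L : ℕ} (hL : 0 < L) (N : ℕ × ℕ) :
    0 < ZLN a L N := by
  rw [ZLN, tsum_SigmaL_eq_sum]
  refine Finset.sum_pos (fun η _ => Finset.prod_pos fun x _ => ha _)
    ⟨Pi.single ⟨0, hL⟩ N, mem_eventFinset.2 (by simp [SigmaL])⟩

lemma nuProb_pos {a : ℕ × ℕ → ℝ} (ha : ∀ k, 0 < a k) {μ : ℝ × ℝ}
    (hμ : Summable (zsummand a μ)) {L : ℕ} (hL : 0 < L) (N : ℕ × ℕ) :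
    0 < nuProb a μ L N := by
  have := ZLN_pos ha hL N
  have := zfun_pos ha hμ
  rw [nuProb_eq]
  positivity

lemma nuProb_le_one {a : ℕ × ℕ → ℝ} (ha : ∀ k, 0 < a k) {μ : ℝ × ℝ}
    (hμ : Summable (zsummand a μ)) (L : ℕ) (N : ℕ × ℕ) : nuProb a μ L N ≤ 1 := by
  have hν := nu1_nonneg (fun k => (ha k).le) μ
  have hbox : ∑ k ∈ Finset.Iic N, nu1 a μ k ≤ 1 := by
    simp only [nu1]
    rw [← Finset.sum_div, div_le_one (zfun_pos ha hμ)]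
    exact hμ.sum_le_tsum _ fun k _ => (zsummand_pos ha μ k).le
  calc nuProb a μ L N = ∑ η ∈ eventFinset L N, ∏ x, nu1 a μ (η x) := by
        simp_rw [nuProb, tsum_SigmaL_eq_sum, nuL_eq_prod_nu1]
    _ ≤ ∑ η ∈ Fintype.piFinset fun _ : Fin L => Finset.Iic N, ∏ x, nu1 a μ (η x) :=
        Finset.sum_le_sum_of_subset_of_nonneg (Finset.filter_subset _ _)
          fun η _ _ => Finset.prod_nonneg fun x _ => hν _
    _ = ∏ _x : Fin L, ∑ k ∈ Finset.Iic N, nu1 a μ k := (Finset.prod_univ_sum _ _).symm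
    _ ≤ 1 := Finset.prod_le_one (fun _ _ => Finset.sum_nonneg fun k _ => hν k) fun _ _ => hbox

lemma relEnt_eq_neg_log_nuProb {a : ℕ × ℕ → ℝ} (ha : ∀ k, 0 < a k) {μ : ℝ × ℝ}
    (hμ : Summable (zsummand a μ)) {L : ℕ} (hL : 0 < L) (N : ℕ × ℕ) :
    relEnt a μ L N = -log (nuProb a μ L N) := by
  have hZ := ZLN_pos ha hL N
  have hz := zfun_pos ha hμ
  have hterm : ∀ η, piLN a L N η * log (piLN a L N η / nuL a μ L η) =
      piLN a L N η * -log (nuProb a μ L N) := by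
    intro η
    by_cases h : SigmaL L η = N
    · have hw : 0 < wprod a L η := Finset.prod_pos fun x _ => ha _
      rw [piLN, if_pos h, nuL_eq_of_SigmaL_eq a μ h, nuProb_eq, ← log_inv]
      congr 2
      field_simp
    · simp [piLN, h]
  have hpi : ∑' η, piLN a L N η = 1 := by
    have : piLN a L N = {η | SigmaL L η = N}.indicator fun η => wprod a L η / ZLN a L N := by
      ext η
      simp [piLN, Set.indicator_apply]
    rw [this, ← tsum_subtype, tsum_div_const]
    exact div_self hZ.ne'
  rw [relEnt, tsum_congr hterm, tsum_mul_right, hpi, one_mul]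

lemma card_image_perm_eq_multinomial {L : ℕ} {S : Finset (ℕ × ℕ)} {c : ℕ × ℕ → ℕ}
    (hc : ∑ k ∈ S, c k = L) (τ : Fin L → S) (hτ : ∀ i, Fintype.card {x // τ x = i} = c i) :
    (Finset.univ.image fun σ : Equiv.Perm (Fin L) => fun x => (τ (σ x) : ℕ × ℕ)).card =
      Nat.multinomial S c := by
  have h := card_image_comp_perm_mul_prod_factorial τ
  simp only [hτ, Fintype.card_fin, Finset.prod_coe_sort S fun k => (c k)!, ← hc,
    ← Nat.multinomial_spec S c] at h
  have himage : (Finset.univ.image fun σ : Equiv.Perm (Fin L) => fun x => (τ (σ x) : ℕ × ℕ)) =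
      (Finset.univ.image fun σ : Equiv.Perm (Fin L) => τ ∘ σ).image
        fun f : Fin L → S => Subtype.val ∘ f := by
    rw [Finset.image_image]
    rfl
  rw [himage, Finset.card_image_of_injective _ (Subtype.val_injective.comp_left (α := Fin L))]
  rw [mul_comm] at h
  exact Nat.eq_of_mul_eq_mul_left (Finset.prod_pos fun k _ => Nat.factorial_pos _) h

lemma multinomial_mul_prod_pow_le_nuProb {a : ℕ × ℕ → ℝ} (ha : ∀ k, 0 ≤ a k) (μ : ℝ × ℝ)
    {L : ℕ} {N : ℕ × ℕ} {S : Finset (ℕ × ℕ)} {c : ℕ × ℕ → ℕ} (hc : ∑ k ∈ S, c k = L)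
    (hN : ∑ k ∈ S, c k • k = N) :
    (Nat.multinomial S c : ℝ) * ∏ k ∈ S, nu1 a μ k ^ c k ≤ nuProb a μ L N := by
  obtain ⟨τ, hτ⟩ := exists_card_fiber_eq (fun k : S => c k) ((Finset.sum_coe_sort S c).trans hc)
  have hmem : ∀ σ : Equiv.Perm (Fin L), (fun x => (τ (σ x) : ℕ × ℕ)) ∈ eventFinset L N := by
    intro σ
    rw [mem_eventFinset, SigmaL, Equiv.sum_comp σ fun x => (τ x : ℕ × ℕ),
      sum_comp_eq_sum_nsmul_card_fiber τ fun k => (k : ℕ × ℕ)]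
    simp only [hτ]
    rw [Finset.sum_coe_sort S fun k => c k • k, hN]
  have hweight : ∀ σ : Equiv.Perm (Fin L),
      ∏ x, nu1 a μ (τ (σ x)) = ∏ k ∈ S, nu1 a μ k ^ c k := by
    intro σ
    rw [Equiv.prod_comp σ fun x => nu1 a μ (τ x),
      prod_comp_eq_prod_pow_card_fiber τ fun k => nu1 a μ k]
    simp only [hτ]
    rw [Finset.prod_coe_sort S fun k => nu1 a μ k ^ c k]
  set I := Finset.univ.image fun σ : Equiv.Perm (Fin L) => fun x => (τ (σ x) : ℕ × ℕ)
  calc (Nat.multinomial S c : ℝ) * ∏ k ∈ S, nu1 a μ k ^ c k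
      = ∑ η ∈ I, ∏ x, nu1 a μ (η x) := by
        rw [← card_image_perm_eq_multinomial hc τ hτ, Finset.sum_congr rfl, Finset.sum_const,
          nsmul_eq_mul]
        intro η hη
        obtain ⟨σ, -, rfl⟩ := Finset.mem_image.1 hη
        exact hweight σ
    _ ≤ ∑ η ∈ eventFinset L N, ∏ x, nu1 a μ (η x) := by
        refine Finset.sum_le_sum_of_subset_of_nonneg ?_
          fun η _ _ => Finset.prod_nonneg fun x _ => nu1_nonneg ha μ _
        intro η hη
        obtain ⟨σ, -, rfl⟩ := Finset.mem_image.1 hη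
        exact hmem σ
    _ = nuProb a μ L N := by simp_rw [nuProb, tsum_SigmaL_eq_sum, nuL_eq_prod_nu1]

lemma neg_log_nuProb_le {a : ℕ × ℕ → ℝ} (ha : ∀ k, 0 < a k) {μ : ℝ × ℝ}
    (hμ : Summable (zsummand a μ)) {L : ℕ} {N : ℕ × ℕ} (hL : 0 < L) {S : Finset (ℕ × ℕ)}
    {c : ℕ × ℕ → ℕ} (hc : ∑ k ∈ S, c k = L) (hN : ∑ k ∈ S, c k • k = N) :
    -log (nuProb a μ L N) ≤
      ∑ k ∈ S, c k * log ((c k / L) / nu1 a μ k) + S.card * (1 + log L) := by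
  have hν := nu1_pos ha hμ
  have hlog : log (Nat.multinomial S c) + ∑ k ∈ S, c k * log (nu1 a μ k) ≤
      log (nuProb a μ L N) := by
    have hprod : 0 < ∏ k ∈ S, nu1 a μ k ^ c k := Finset.prod_pos fun k _ => pow_pos (hν k) _
    have hmult : (0 : ℝ) < Nat.multinomial S c := Nat.cast_pos.2 (Nat.multinomial_pos S c)
    calc log (Nat.multinomial S c) + ∑ k ∈ S, c k * log (nu1 a μ k)
        = log (Nat.multinomial S c * ∏ k ∈ S, nu1 a μ k ^ c k) := by
          rw [log_mul hmult.ne' hprod.ne', log_prod fun k _ => (pow_pos (hν k) _).ne']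
          simp only [log_pow]
      _ ≤ log (nuProb a μ L N) :=
          log_le_log (mul_pos hmult hprod) (multinomial_mul_prod_pow_le_nuProb
            (fun k => (ha k).le) μ hc hN)
  have hterm : ∀ k ∈ S, c k * log ((c k / L) / nu1 a μ k) =
      c k * log (c k) - c k * log L - c k * log (nu1 a μ k) := by
    intro k _
    rcases (c k).eq_zero_or_pos with h0 | hpos
    · simp [h0]
    · rw [log_div (by positivity) (hν k).ne', log_div (by positivity) (by positivity)]
      ring
  rw [Finset.sum_congr rfl hterm, Finset.sum_sub_distrib, Finset.sum_sub_distrib,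
    ← Finset.sum_mul, ← Nat.cast_sum, hc]
  linarith [log_multinomial_ge S c hc]

def pressOn (a : ℕ × ℕ → ℝ) (S : Finset (ℕ × ℕ)) (μ : ℝ × ℝ) : ℝ :=
  log (∑ k ∈ S, zsummand a μ k)

def nu1On (a : ℕ × ℕ → ℝ) (S : Finset (ℕ × ℕ)) (μ : ℝ × ℝ) (k : ℕ × ℕ) : ℝ :=
  zsummand a μ k / ∑ k' ∈ S, zsummand a μ k'

section Variational

variable {a : ℕ × ℕ → ℝ} {S T : Finset (ℕ × ℕ)} {ρ μ : ℝ × ℝ}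

lemma sum_zsummand_pos (ha : ∀ k, 0 < a k) (hS : S.Nonempty) (μ : ℝ × ℝ) :
    0 < ∑ k ∈ S, zsummand a μ k :=
  Finset.sum_pos (fun k _ => zsummand_pos ha μ k) hS

lemma nu1On_pos (ha : ∀ k, 0 < a k) (hS : S.Nonempty) (μ : ℝ × ℝ) (k : ℕ × ℕ) :
    0 < nu1On a S μ k :=
  div_pos (zsummand_pos ha μ k) (sum_zsummand_pos ha hS μ)

lemma sum_nu1On (ha : ∀ k, 0 < a k) (hS : S.Nonempty) (μ : ℝ × ℝ) :
    ∑ k ∈ S, nu1On a S μ k = 1 := by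
  simp only [nu1On]
  rw [← Finset.sum_div, div_self (sum_zsummand_pos ha hS μ).ne']

lemma log_zsummand (ha : ∀ k, 0 < a k) (μ : ℝ × ℝ) (k : ℕ × ℕ) :
    log (zsummand a μ k) = log (a k) + dotNat μ k := by
  rw [zsummand, log_mul (ha k).ne' (exp_pos _).ne', log_exp]

lemma continuous_pressOn (ha : ∀ k, 0 < a k) (hS : S.Nonempty) :
    Continuous (pressOn a S) := by
  refine Continuous.log ?_ fun μ => (sum_zsummand_pos ha hS μ).ne'
  refine continuous_finsetSum _ fun k _ => continuous_const.mul (continuous_exp.comp ?_)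
  simp only [dotNat]
  fun_prop

lemma pressOn_mono (ha : ∀ k, 0 < a k) (hS : S.Nonempty) (hST : S ⊆ T) (μ : ℝ × ℝ) :
    pressOn a S μ ≤ pressOn a T μ :=
  log_le_log (sum_zsummand_pos ha hS μ)
    (Finset.sum_le_sum_of_subset_of_nonneg hST fun k _ _ => (zsummand_pos ha μ k).le)

lemma pressOn_le_press (ha : ∀ k, 0 < a k) (hS : S.Nonempty)
    (hμ : Summable (zsummand a μ)) : pressOn a S μ ≤ press a μ :=
  log_le_log (sum_zsummand_pos ha hS μ) (hμ.sum_le_tsum S fun k _ => (zsummand_pos ha μ k).le)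

lemma summable_and_press_le_of_pressOn_le (ha : ∀ k, 0 < a k) {t : ℝ}
    (h : ∀ S : Finset (ℕ × ℕ), S.Nonempty → pressOn a S μ ≤ t) :
    Summable (zsummand a μ) ∧ press a μ ≤ t := by
  have hsum : ∀ S : Finset (ℕ × ℕ), ∑ k ∈ S, zsummand a μ k ≤ exp t := fun S =>
    calc ∑ k ∈ S, zsummand a μ k ≤ ∑ k ∈ insert (0, 0) S, zsummand a μ k :=
          Finset.sum_le_sum_of_subset_of_nonneg (Finset.subset_insert _ _)
            fun k _ _ => (zsummand_pos ha μ k).le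
      _ ≤ exp t := (log_le_iff_le_exp (sum_zsummand_pos ha (Finset.insert_nonempty _ _) μ)).1
          (h _ (Finset.insert_nonempty _ _))
  have hμ : Summable (zsummand a μ) :=
    summable_of_sum_le (fun k => (zsummand_pos ha μ k).le) hsum
  exact ⟨hμ, (log_le_iff_le_exp (zfun_pos ha hμ)).2 (hμ.tsum_le_of_sum_le hsum)⟩

lemma mem_Dmu_of_summable (ha : ∀ k, 0 ≤ a k) (hμ : Summable (zsummand a μ)) {s : ℝ}
    (hs : 0 < s) : (μ.1 - s, μ.2 - s) ∈ Dmu a := by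
  have hshift : ∀ k : ℕ × ℕ, zsummand a (μ.1 - s, μ.2 - s) k =
      zsummand a μ k * exp (-(s * (k.1 + k.2))) := by
    intro k
    rw [zsummand, zsummand, mul_assoc, ← exp_add, dotNat, dotNat]
    ring_nf
  have hbound : ∀ (k : ℕ × ℕ) (x : ℝ), x ≤ k.1 + k.2 →
      x * zsummand a (μ.1 - s, μ.2 - s) k ≤ exp (-1) / s * zsummand a μ k := by
    intro k x hxk
    have hdecay : (k.1 + k.2 : ℝ) * exp (-(s * (k.1 + k.2))) ≤ exp (-1) / s := by
      rw [le_div_iff₀ hs, mul_comm _ s, ← mul_assoc]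
      exact mul_exp_neg_le_exp_neg_one _
    have hz := mul_nonneg (ha k) (exp_pos (dotNat μ k)).le
    rw [hshift]
    calc x * (zsummand a μ k * exp (-(s * (k.1 + k.2))))
        ≤ (k.1 + k.2 : ℝ) * exp (-(s * (k.1 + k.2))) * zsummand a μ k := by
          rw [mul_comm (zsummand a μ k), ← mul_assoc]
          exact mul_le_mul_of_nonneg_right
            (mul_le_mul_of_nonneg_right hxk (exp_pos _).le) hz
      _ ≤ exp (-1) / s * zsummand a μ k := mul_le_mul_of_nonneg_right hdecay hz
  have hnonneg : ∀ k : ℕ × ℕ, 0 ≤ zsummand a (μ.1 - s, μ.2 - s) k :=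
    fun k => mul_nonneg (ha k) (exp_pos _).le
  refine ⟨Summable.of_nonneg_of_le (fun k => mul_nonneg k.1.cast_nonneg (hnonneg k))
      (fun k => hbound k _ (by simp)) (hμ.mul_left _),
    Summable.of_nonneg_of_le (fun k => mul_nonneg k.2.cast_nonneg (hnonneg k))
      (fun k => hbound k _ (by simp)) (hμ.mul_left _)⟩

lemma dotR_sub_press_le_of_summable (ha : ∀ k, 0 < a k) {μb : ℝ × ℝ}
    (hmax : ∀ μ ∈ Dmu a, dotR ρ μ - press a μ ≤ dotR ρ μb - press a μb)
    (hμ : Summable (zsummand a μ)) : dotR ρ μ - press a μ ≤ dotR ρ μb - press a μb := by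
  -- tilting `μ` down by `(s, s)` lands in `Dmu a` and costs at most `s (ρ.1 + ρ.2)`
  refine le_of_forall_pos_le_add fun ε hε => ?_
  set s := ε / (|ρ.1 + ρ.2| + 1)
  have hs : 0 < s := by positivity
  have hsρ : s * (ρ.1 + ρ.2) ≤ ε := by
    calc s * (ρ.1 + ρ.2) ≤ s * (|ρ.1 + ρ.2| + 1) :=
          mul_le_mul_of_nonneg_left ((le_abs_self _).trans (le_add_of_nonneg_right zero_le_one))
            hs.le
      _ = ε := div_mul_cancel₀ _ (by positivity)
  have hshift := mem_Dmu_of_summable (fun k => (ha k).le) hμ hs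
  have hle : ∀ k, zsummand a (μ.1 - s, μ.2 - s) k ≤ zsummand a μ k := fun k =>
    mul_le_mul_of_nonneg_left (exp_le_exp.2 (by simp only [dotNat]; nlinarith [hs])) (ha k).le
  have hpress : press a (μ.1 - s, μ.2 - s) ≤ press a μ :=
    log_le_log (zfun_pos ha (summable_zsummand_of_mem_Dmu (fun k => (ha k).le) hshift))
      (Summable.tsum_le_tsum hle (summable_zsummand_of_mem_Dmu (fun k => (ha k).le) hshift) hμ)
  have := hmax _ hshift
  simp only [dotR] at this ⊢
  nlinarith

lemma min_mul_norm_le_sub_dotR (hρ1 : 0 < ρ.1) (hρ2 : 0 < ρ.2) {M : ℝ}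
    (hM : 2 * (ρ.1 + ρ.2) ≤ M) (μ : ℝ × ℝ) :
    min ρ.1 ρ.2 * ‖μ‖ ≤ M * max (max μ.1 μ.2) 0 - dotR ρ μ := by
  set c := min ρ.1 ρ.2
  set m := max (max μ.1 μ.2) 0
  have hc : 0 < c := lt_min hρ1 hρ2
  have hcρ : c ≤ ρ.1 ∧ c ≤ ρ.2 := ⟨min_le_left _ _, min_le_right _ _⟩
  have hm1 : μ.1 ≤ m := (le_max_left _ _).trans (le_max_left _ _)
  have hm2 : μ.2 ≤ m := (le_max_right _ _).trans (le_max_left _ _)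
  have hm0 : 0 ≤ m := le_max_right _ _
  have habs : ∀ x : ℝ, x ≤ m → c * |x| ≤ c * (2 * m - x) := fun x hx =>
    mul_le_mul_of_nonneg_left (abs_le.2 ⟨by linarith, by linarith⟩) hc.le
  have f0 : 0 ≤ (M - 2 * c - ρ.1 - ρ.2) * m := mul_nonneg (by linarith) hm0
  have f1 : 0 ≤ (ρ.1 - c) * (m - μ.1) := mul_nonneg (by linarith) (by linarith)
  have f2 : 0 ≤ (ρ.2 - c) * (m - μ.2) := mul_nonneg (by linarith) (by linarith)
  have f3 : 0 ≤ ρ.1 * (m - μ.1) := mul_nonneg hρ1.le (by linarith)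
  have f4 : 0 ≤ ρ.2 * (m - μ.2) := mul_nonneg hρ2.le (by linarith)
  have f5 : 0 ≤ c * m := mul_nonneg hc.le hm0
  rw [Prod.norm_def, mul_max_of_nonneg _ _ hc.le, Real.norm_eq_abs, Real.norm_eq_abs]
  simp only [dotR]
  refine max_le ?_ ?_ <;> nlinarith [habs _ hm1, habs _ hm2]

lemma add_mul_max_le_pressOn (ha : ∀ k, 0 < a k) {M : ℕ} (h00 : ((0 : ℕ), (0 : ℕ)) ∈ S)
    (hM0 : (M, (0 : ℕ)) ∈ S) (h0M : ((0 : ℕ), M) ∈ S) (μ : ℝ × ℝ) :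
    min (log (a (0, 0))) (min (log (a (M, 0))) (log (a (0, M)))) +
      M * max (max μ.1 μ.2) 0 ≤ pressOn a S μ := by
  have hterm : ∀ k ∈ S, log (a k) + dotNat μ k ≤ pressOn a S μ := fun k hk => by
    rw [← log_zsummand ha]
    exact log_le_log (zsummand_pos ha μ k)
      (Finset.single_le_sum (fun k _ => (zsummand_pos ha μ k).le) hk)
  have h1 := hterm _ hM0
  have h2 := hterm _ h0M
  have h3 := hterm _ h00
  simp only [dotNat, Nat.cast_zero, mul_zero, add_zero, zero_add] at h1 h2 h3
  have := min_le_left (log (a (0, 0))) (min (log (a (M, 0))) (log (a (0, M))))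
  have := min_le_right (log (a (0, 0))) (min (log (a (M, 0))) (log (a (0, M))))
  have := min_le_left (log (a (M, 0))) (log (a (0, M)))
  have := min_le_right (log (a (M, 0))) (log (a (0, M)))
  rw [mul_max_of_nonneg _ _ M.cast_nonneg, mul_max_of_nonneg _ _ M.cast_nonneg, mul_zero,
    ← le_sub_iff_add_le']
  refine max_le (max_le ?_ ?_) ?_ <;> linarith

lemma tendsto_dotR_sub_pressOn_cocompact (ha : ∀ k, 0 < a k) (hρ1 : 0 < ρ.1)
    (hρ2 : 0 < ρ.2) {M : ℕ} (hM : 2 * (ρ.1 + ρ.2) ≤ M) (h00 : ((0 : ℕ), (0 : ℕ)) ∈ S)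
    (hM0 : (M, (0 : ℕ)) ∈ S) (h0M : ((0 : ℕ), M) ∈ S) :
    Tendsto (fun μ => dotR ρ μ - pressOn a S μ) (cocompact (ℝ × ℝ)) atBot := by
  refine tendsto_atBot_mono (fun μ => ?_) (tendsto_atBot_add_const_left _
    (-min (log (a (0, 0))) (min (log (a (M, 0))) (log (a (0, M)))))
    (tendsto_neg_atTop_atBot.comp
      (tendsto_norm_cocompact_atTop.const_mul_atTop (lt_min hρ1 hρ2))))
  have h1 := min_mul_norm_le_sub_dotR hρ1 hρ2 hM μ
  have h2 := add_mul_max_le_pressOn ha h00 hM0 h0M μ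
  simp only [Function.comp_apply]
  linarith

lemma dotR_eq_sum_nu1On_mul_of_isMax (ha : ∀ k, 0 < a k) (hS : S.Nonempty) {μS : ℝ × ℝ}
    (hmax : ∀ μ, dotR ρ μ - pressOn a S μ ≤ dotR ρ μS - pressOn a S μS)
    (v : ℝ × ℝ) : dotR ρ v = ∑ k ∈ S, nu1On a S μS k * dotNat v k := by
  have hline : ∀ (t : ℝ) (k : ℕ × ℕ), zsummand a (μS + t • v) k =
      a k * exp (dotNat μS k + t * dotNat v k) := fun t k => by
    simp only [zsummand, dotNat, Prod.fst_add, Prod.snd_add, Prod.smul_fst, Prod.smul_snd,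
      smul_eq_mul]
    ring_nf
  have hsum : HasDerivAt (fun t : ℝ => ∑ k ∈ S, zsummand a (μS + t • v) k)
      (∑ k ∈ S, zsummand a μS k * dotNat v k) 0 := by
    simp only [hline]
    refine HasDerivAt.fun_sum fun k _ => ?_
    simpa [zsummand, mul_assoc] using
      (((hasDerivAt_id (0 : ℝ)).mul_const (dotNat v k)).const_add (dotNat μS k)).exp.const_mul
        (a k)
  have hlin : HasDerivAt (fun t : ℝ => dotR ρ (μS + t • v)) (dotR ρ v) 0 := by
    have : (fun t : ℝ => dotR ρ (μS + t • v)) = fun t => dotR ρ μS + t * dotR ρ v := by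
      funext t
      simp only [dotR, Prod.fst_add, Prod.snd_add, Prod.smul_fst, Prod.smul_snd, smul_eq_mul]
      ring
    rw [this]
    simpa using ((hasDerivAt_id (0 : ℝ)).mul_const (dotR ρ v)).const_add (dotR ρ μS)
  have hlocal : IsLocalMax (fun t : ℝ => dotR ρ (μS + t • v) - pressOn a S (μS + t • v)) 0 :=
    Filter.Eventually.of_forall fun t => by simpa using hmax (μS + t • v)
  have hzero := hlocal.hasDerivAt_eq_zero
    (hlin.sub (hsum.log (by simpa using (sum_zsummand_pos ha hS μS).ne')))
  simp only [zero_smul, add_zero, sub_eq_zero] at hzero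
  rw [hzero, Finset.sum_div]
  simp only [nu1On, div_mul_eq_mul_div]

lemma sum_nu1On_mul_log_div_nu1 (ha : ∀ k, 0 < a k) (hS : S.Nonempty) {μS μb : ℝ × ℝ}
    (hμb : Summable (zsummand a μb))
    (hmean : ∀ v, dotR ρ v = ∑ k ∈ S, nu1On a S μS k * dotNat v k) :
    ∑ k ∈ S, nu1On a S μS k * log (nu1On a S μS k / nu1 a μb k) =
      (dotR ρ μS - pressOn a S μS) - (dotR ρ μb - press a μb) := by
  have hterm : ∀ k ∈ S, log (nu1On a S μS k / nu1 a μb k) =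
      dotNat (μS - μb) k - pressOn a S μS + press a μb := fun k _ => by
    have h1 := zsummand_pos ha μS k
    have h2 := sum_zsummand_pos ha hS μS
    have h3 := zsummand_pos ha μb k
    have h4 := zfun_pos ha hμb
    rw [nu1On, nu1, log_div (div_pos h1 h2).ne' (div_pos h3 h4).ne', log_div h1.ne' h2.ne',
      log_div h3.ne' h4.ne', log_zsummand ha, log_zsummand ha, pressOn, press]
    simp only [dotNat, Prod.fst_sub, Prod.snd_sub]
    ring
  rw [Finset.sum_congr rfl fun k hk => by rw [hterm k hk], Finset.sum_congr rfl fun k _ =>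
    mul_add _ _ _, Finset.sum_add_distrib, Finset.sum_congr rfl fun k _ => mul_sub _ _ _,
    Finset.sum_sub_distrib, ← hmean, ← Finset.sum_mul, ← Finset.sum_mul, sum_nu1On ha hS]
  simp only [dotR, Prod.fst_sub, Prod.snd_sub]
  ring

lemma continuous_dotR (ρ : ℝ × ℝ) : Continuous (dotR ρ) := by
  unfold dotR
  fun_prop

lemma eventually_dotR_sub_pressOn_lt (ha : ∀ k, 0 < a k) {μb : ℝ × ℝ}
    (hmax : ∀ μ, Summable (zsummand a μ) → dotR ρ μ - press a μ ≤ dotR ρ μb - press a μb)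
    (μ : ℝ × ℝ) {ε : ℝ} (hε : 0 < ε) :
    ∀ᶠ S in atTop, dotR ρ μ - pressOn a S μ < dotR ρ μb - press a μb + ε := by
  obtain ⟨S₀, hS₀, hlt⟩ : ∃ S₀ : Finset (ℕ × ℕ), S₀.Nonempty ∧
      dotR ρ μ - (dotR ρ μb - press a μb + ε) < pressOn a S₀ μ := by
    by_contra! h
    obtain ⟨hμ, hpress⟩ := summable_and_press_le_of_pressOn_le ha h
    linarith [hmax μ hμ]
  filter_upwards [eventually_ge_atTop S₀] with S hS
  linarith [pressOn_mono ha hS₀ hS μ]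

lemma eventually_forall_mem_dotR_sub_pressOn_lt (ha : ∀ k, 0 < a k) {μb : ℝ × ℝ}
    (hmax : ∀ μ, Summable (zsummand a μ) → dotR ρ μ - press a μ ≤ dotR ρ μb - press a μb)
    {K : Set (ℝ × ℝ)} (hK : IsCompact K) {ε : ℝ} (hε : 0 < ε) :
    ∀ᶠ S in atTop, ∀ μ ∈ K, dotR ρ μ - pressOn a S μ < dotR ρ μb - press a μb + ε := by
  have hanti : ∀ {S S' : Finset (ℕ × ℕ)}, S ⊆ S' → ∀ μ,
      dotR ρ μ - pressOn a (insert (0, 0) S') μ ≤ dotR ρ μ - pressOn a (insert (0, 0) S) μ :=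
    fun h μ => sub_le_sub_left (pressOn_mono ha (Finset.insert_nonempty _ _)
      (Finset.insert_subset_insert _ h) μ) _
  obtain ⟨S₁, hS₁⟩ := hK.elim_directed_cover
    (fun S => {μ | dotR ρ μ - pressOn a (insert (0, 0) S) μ < dotR ρ μb - press a μb + ε})
    (fun S => isOpen_lt ((continuous_dotR ρ).sub
      (continuous_pressOn ha (Finset.insert_nonempty _ _))) continuous_const)
    (fun μ _ => by
      obtain ⟨S, hS⟩ := eventually_atTop.1 (eventually_dotR_sub_pressOn_lt ha hmax μ hε)
      exact Set.mem_iUnion.2 ⟨S, hS _ (Finset.subset_insert _ _)⟩)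
    (fun S S' => ⟨S ∪ S', fun μ hμ => (hanti Finset.subset_union_left μ).trans_lt hμ,
      fun μ hμ => (hanti Finset.subset_union_right μ).trans_lt hμ⟩)
  filter_upwards [eventually_ge_atTop (insert (0, 0) S₁)] with S hS μ hμ
  exact (sub_le_sub_left (pressOn_mono ha (Finset.insert_nonempty _ _) hS μ) _).trans_lt
    (hS₁ hμ)

lemma exists_nu1On_near (ha : ∀ k, 0 < a k) (hρ1 : 0 < ρ.1) (hρ2 : 0 < ρ.2) {μb : ℝ × ℝ}
    (hμb : Summable (zsummand a μb))
    (hmax : ∀ μ, Summable (zsummand a μ) → dotR ρ μ - press a μ ≤ dotR ρ μb - press a μb)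
    (B : Finset (ℕ × ℕ)) {ε : ℝ} (hε : 0 < ε) :
    ∃ (S : Finset (ℕ × ℕ)) (μS : ℝ × ℝ), B ⊆ S ∧ S.Nonempty ∧
      (∀ v, dotR ρ v = ∑ k ∈ S, nu1On a S μS k * dotNat v k) ∧
      ∑ k ∈ S, nu1On a S μS k * log (nu1On a S μS k / nu1 a μb k) < ε := by
  obtain ⟨M, hM⟩ : ∃ M : ℕ, 2 * (ρ.1 + ρ.2) ≤ M := ⟨_, Nat.le_ceil _⟩
  set S₀ : Finset (ℕ × ℕ) := {(0, 0), (M, 0), (0, M)}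
  have hcoercive : ∀ S, S₀ ⊆ S →
      Tendsto (fun μ => dotR ρ μ - pressOn a S μ) (cocompact (ℝ × ℝ)) atBot :=
    fun S hS => tendsto_dotR_sub_pressOn_cocompact ha hρ1 hρ2 hM
      (hS (by simp [S₀])) (hS (by simp [S₀])) (hS (by simp [S₀]))
  -- off `K` the functional for `S₀` is below `ρ·μb - p(μb)`, so maximizers for `S ⊇ S₀` lie in `K`
  obtain ⟨K, hK, hKc⟩ := mem_cocompact.1
    ((hcoercive S₀ subset_rfl).eventually (eventually_lt_atBot (dotR ρ μb - press a μb)))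
  obtain ⟨S, hBS, hS₀S, hSK⟩ := ((eventually_ge_atTop B).and ((eventually_ge_atTop S₀).and
    (eventually_forall_mem_dotR_sub_pressOn_lt ha hmax hK hε))).exists
  have hS₀ : S₀.Nonempty := Finset.insert_nonempty _ _
  have hS : S.Nonempty := hS₀.mono hS₀S
  obtain ⟨μS, hμS⟩ := (show Continuous fun μ => dotR ρ μ - pressOn a S μ from
    (continuous_dotR ρ).sub (continuous_pressOn ha hS)).exists_forall_ge (hcoercive S hS₀S)
  have hμSK : μS ∈ K := by
    by_contra hK'
    have h1 : dotR ρ μS - pressOn a S₀ μS < dotR ρ μb - press a μb := hKc hK'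
    linarith [pressOn_mono ha hS₀ hS₀S μS, hμS μb, pressOn_le_press ha hS hμb]
  have hmean := dotR_eq_sum_nu1On_mul_of_isMax ha hS hμS
  refine ⟨S, μS, hBS, hS, hmean, ?_⟩
  rw [sum_nu1On_mul_log_div_nu1 ha hS hμb hmean]
  linarith [hSK μS hμSK]

end Variational

lemma tendsto_natSub_div {u v : ℕ → ℕ} {x y : ℝ}
    (hu : Tendsto (fun L => (u L : ℝ) / L) atTop (𝓝 x))
    (hv : Tendsto (fun L => (v L : ℝ) / L) atTop (𝓝 y)) (hyx : y < x) :
    (∀ᶠ L in atTop, v L ≤ u L) ∧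
      Tendsto (fun L => ((u L - v L : ℕ) : ℝ) / L) atTop (𝓝 (x - y)) := by
  have hle : ∀ᶠ L in atTop, v L ≤ u L := by
    filter_upwards [(hu.sub hv).eventually (eventually_gt_nhds (sub_pos.2 hyx))] with L hL
    by_contra! h
    have : (u L : ℝ) / L ≤ v L / L :=
      div_le_div_of_nonneg_right (by exact_mod_cast h.le) L.cast_nonneg
    linarith
  refine ⟨hle, (hu.sub hv).congr' ?_⟩
  filter_upwards [hle] with L hL
  rw [Nat.cast_sub hL, sub_div]

lemma tendsto_natCast_floor_mul_div {x : ℝ} (hx : 0 ≤ x) :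
    Tendsto (fun L : ℕ => (⌊x * L⌋₊ : ℝ) / L) atTop (𝓝 x) :=
  (tendsto_nat_floor_mul_div_atTop hx).comp tendsto_natCast_atTop_atTop

def originAndUnits : Finset (ℕ × ℕ) := {(0, 0), (1, 0), (0, 1)}

lemma sum_eq_add_sum_sdiff_originAndUnits {M : Type*} [AddCommMonoid M] {S : Finset (ℕ × ℕ)}
    (hS : originAndUnits ⊆ S) (f : ℕ × ℕ → M) :
    ∑ k ∈ S, f k = f (0, 0) + f (1, 0) + f (0, 1) + ∑ k ∈ S \ originAndUnits, f k := by
  rw [← Finset.sum_sdiff hS, originAndUnits, Finset.sum_insert (by decide),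
    Finset.sum_insert (by decide), Finset.sum_singleton]
  abel

def floorMoment (S : Finset (ℕ × ℕ)) (q : ℕ × ℕ → ℝ) (L : ℕ) (g : ℕ × ℕ → ℕ) : ℕ :=
  ∑ k ∈ S \ originAndUnits, ⌊q k * L⌋₊ * g k

/-- The points `(1,0)`, `(0,1)` and `(0,0)` absorb the rounding errors of the two moments and of
the total. -/
def roundedCounts (S : Finset (ℕ × ℕ)) (q : ℕ × ℕ → ℝ) (N : ℕ × ℕ) (L : ℕ) (k : ℕ × ℕ) : ℕ :=
  if k = (1, 0) then N.1 - floorMoment S q L Prod.fst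
  else if k = (0, 1) then N.2 - floorMoment S q L Prod.snd
  else if k = (0, 0) then
    L - (N.1 - floorMoment S q L Prod.fst + (N.2 - floorMoment S q L Prod.snd) +
      floorMoment S q L 1)
  else ⌊q k * L⌋₊

section Rounding

variable {S : Finset (ℕ × ℕ)} {q : ℕ × ℕ → ℝ}

lemma roundedCounts_of_mem_sdiff {N : ℕ × ℕ} {L : ℕ} {k : ℕ × ℕ}
    (hk : k ∈ S \ originAndUnits) : roundedCounts S q N L k = ⌊q k * L⌋₊ := by
  simp only [originAndUnits, Finset.mem_sdiff, Finset.mem_insert, Finset.mem_singleton,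
    not_or] at hk
  simp [roundedCounts, hk.2.1, hk.2.2.1, hk.2.2.2]

lemma sum_roundedCounts (hS : originAndUnits ⊆ S) {N : ℕ × ℕ} {L : ℕ}
    (h1 : floorMoment S q L Prod.fst ≤ N.1) (h2 : floorMoment S q L Prod.snd ≤ N.2)
    (h0 : N.1 - floorMoment S q L Prod.fst + (N.2 - floorMoment S q L Prod.snd) +
      floorMoment S q L 1 ≤ L) :
    ∑ k ∈ S, roundedCounts S q N L k = L ∧ ∑ k ∈ S, roundedCounts S q N L k • k = N := by
  have hmoment : ∀ g : ℕ × ℕ → ℕ,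
      ∑ k ∈ S \ originAndUnits, roundedCounts S q N L k * g k = floorMoment S q L g :=
    fun g => Finset.sum_congr rfl fun k hk => by rw [roundedCounts_of_mem_sdiff hk]
  have h00 : roundedCounts S q N L (0, 0) = L - (N.1 - floorMoment S q L Prod.fst +
      (N.2 - floorMoment S q L Prod.snd) + floorMoment S q L 1) := by simp [roundedCounts]
  have h10 : roundedCounts S q N L (1, 0) = N.1 - floorMoment S q L Prod.fst := by
    simp [roundedCounts]
  have h01 : roundedCounts S q N L (0, 1) = N.2 - floorMoment S q L Prod.snd := by
    simp [roundedCounts]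
  have htotal := hmoment 1
  have hfst := hmoment Prod.fst
  have hsnd := hmoment Prod.snd
  simp only [Pi.one_apply, mul_one] at htotal
  refine ⟨?_, Prod.ext ?_ ?_⟩
  · rw [sum_eq_add_sum_sdiff_originAndUnits hS, htotal, h00, h10, h01]
    omega
  · rw [Prod.fst_sum, sum_eq_add_sum_sdiff_originAndUnits hS]
    simp only [Prod.smul_fst, smul_eq_mul, hfst, h10, mul_zero, mul_one, zero_add]
    omega
  · rw [Prod.snd_sum, sum_eq_add_sum_sdiff_originAndUnits hS]
    simp only [Prod.smul_snd, smul_eq_mul, hsnd, h01, mul_zero, mul_one, zero_add, add_zero]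
    omega

lemma tendsto_floorMoment (hq : ∀ k ∈ S, 0 ≤ q k) (g : ℕ × ℕ → ℕ) :
    Tendsto (fun L => (floorMoment S q L g : ℝ) / L) atTop
      (𝓝 (∑ k ∈ S \ originAndUnits, q k * g k)) := by
  simp only [floorMoment, Nat.cast_sum, Nat.cast_mul, Finset.sum_div, mul_div_right_comm]
  exact tendsto_finsetSum _ fun k hk =>
    (tendsto_natCast_floor_mul_div (hq k (Finset.sdiff_subset hk))).mul_const _

lemma tendsto_roundedCounts (hS : originAndUnits ⊆ S) (hq : ∀ k ∈ S, 0 < q k)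
    (hq1 : ∑ k ∈ S, q k = 1) {ρ : ℝ × ℝ} (hm1 : ∑ k ∈ S, q k * k.1 = ρ.1)
    (hm2 : ∑ k ∈ S, q k * k.2 = ρ.2) {NL : ℕ → ℕ × ℕ}
    (hN1 : Tendsto (fun L => ((NL L).1 : ℝ) / L) atTop (𝓝 ρ.1))
    (hN2 : Tendsto (fun L => ((NL L).2 : ℝ) / L) atTop (𝓝 ρ.2)) :
    (∀ᶠ L in atTop, ∑ k ∈ S, roundedCounts S q (NL L) L k = L ∧
      ∑ k ∈ S, roundedCounts S q (NL L) L k • k = NL L) ∧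
    ∀ k ∈ S, Tendsto (fun L => (roundedCounts S q (NL L) L k : ℝ) / L) atTop (𝓝 (q k)) := by
  have hmem : ∀ k ∈ originAndUnits, 0 < q k := fun k hk => hq k (hS hk)
  simp only [originAndUnits, Finset.mem_insert, Finset.mem_singleton, forall_eq_or_imp,
    forall_eq] at hmem
  have e0 := sum_eq_add_sum_sdiff_originAndUnits hS q
  have e1 := sum_eq_add_sum_sdiff_originAndUnits hS fun k => q k * k.1
  have e2 := sum_eq_add_sum_sdiff_originAndUnits hS fun k => q k * k.2
  simp only [Nat.cast_zero, Nat.cast_one, mul_zero, mul_one, zero_add, add_zero] at e1 e2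
  have hmoment := tendsto_floorMoment fun k hk => (hq k hk).le
  obtain ⟨hle1, hd1⟩ := tendsto_natSub_div hN1 (hmoment Prod.fst) (by linarith)
  obtain ⟨hle2, hd2⟩ := tendsto_natSub_div hN2 (hmoment Prod.snd) (by linarith)
  rw [show ρ.1 - ∑ k ∈ S \ originAndUnits, q k * (k.1 : ℝ) = q (1, 0) by linarith] at hd1
  rw [show ρ.2 - ∑ k ∈ S \ originAndUnits, q k * (k.2 : ℝ) = q (0, 1) by linarith] at hd2
  have hL : Tendsto (fun L : ℕ => (L : ℝ) / L) atTop (𝓝 1) :=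
    tendsto_const_nhds.congr' (by
      filter_upwards [eventually_gt_atTop 0] with L hL
      exact (div_self (Nat.cast_pos.2 hL).ne').symm)
  have hrest := (hd1.add hd2).add (hmoment 1)
  simp only [← add_div, ← Nat.cast_add, Pi.one_apply, Nat.cast_one, mul_one] at hrest
  obtain ⟨hle0, hd0⟩ := tendsto_natSub_div hL hrest (by linarith)
  rw [show 1 - (q (1, 0) + q (0, 1) + ∑ k ∈ S \ originAndUnits, q k) = q (0, 0) by linarith]
    at hd0
  refine ⟨?_, fun k hkS => ?_⟩
  · filter_upwards [hle0, hle1, hle2] with L h0 h1 h2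
    exact sum_roundedCounts hS h1 h2 h0
  by_cases hk : k ∈ originAndUnits
  · simp only [originAndUnits, Finset.mem_insert, Finset.mem_singleton] at hk
    rcases hk with rfl | rfl | rfl
    · exact hd0.congr fun L => by simp [roundedCounts]
    · exact hd1.congr fun L => by simp [roundedCounts]
    · exact hd2.congr fun L => by simp [roundedCounts]
  · simpa only [roundedCounts_of_mem_sdiff (Finset.mem_sdiff.2 ⟨hkS, hk⟩)] using
      tendsto_natCast_floor_mul_div (hq k hkS).le

end Rounding

lemma tendsto_one_add_log_div_atTop :
    Tendsto (fun L : ℕ => (1 + log L) / L) atTop (𝓝 0) := by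
  have hlog : Tendsto (fun x : ℝ => log x / x) atTop (𝓝 0) := by
    simpa using tendsto_pow_log_div_mul_add_atTop 1 0 1 one_ne_zero
  simpa [add_div] using
    tendsto_one_div_atTop_nhds_zero_nat.add (hlog.comp tendsto_natCast_atTop_atTop)

lemma eventually_neg_log_nuProb_div_lt {a : ℕ × ℕ → ℝ} (ha : ∀ k, 0 < a k) {ρ : ℝ × ℝ}
    (hρ1 : 0 < ρ.1) (hρ2 : 0 < ρ.2) {NL : ℕ → ℕ × ℕ}
    (hNL : Tendsto (fun L : ℕ => (((NL L).1 : ℝ) / L, ((NL L).2 : ℝ) / L)) atTop (𝓝 ρ))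
    {μb : ℝ × ℝ} (hμb : Summable (zsummand a μb))
    (hmax : ∀ μ, Summable (zsummand a μ) → dotR ρ μ - press a μ ≤ dotR ρ μb - press a μb)
    {ε : ℝ} (hε : 0 < ε) :
    ∀ᶠ L : ℕ in atTop, -(1 / (L : ℝ)) * log (nuProb a μb L (NL L)) < ε := by
  obtain ⟨S, μS, hBS, hS, hmean, hKL⟩ := exists_nu1On_near ha hρ1 hρ2 hμb hmax originAndUnits hε
  set q := nu1On a S μS
  have hm1 : ∑ k ∈ S, q k * k.1 = ρ.1 := by simpa [dotR, dotNat] using (hmean (1, 0)).symm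
  have hm2 : ∑ k ∈ S, q k * k.2 = ρ.2 := by simpa [dotR, dotNat] using (hmean (0, 1)).symm
  obtain ⟨hc, hcq⟩ := tendsto_roundedCounts hBS (fun k _ => nu1On_pos ha hS μS k)
    (sum_nu1On ha hS μS) hm1 hm2 ((continuous_fst.tendsto ρ).comp hNL)
    ((continuous_snd.tendsto ρ).comp hNL)
  set c := fun L => roundedCounts S q (NL L) L
  have hbound : Tendsto (fun L : ℕ => ∑ k ∈ S, (c L k / L : ℝ) * log ((c L k / L) / nu1 a μb k)
      + S.card * ((1 + log L) / L)) atTop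
      (𝓝 (∑ k ∈ S, q k * log (q k / nu1 a μb k) + S.card * 0)) := by
    refine (tendsto_finsetSum _ fun k hk => ?_).add
      (tendsto_const_nhds.mul tendsto_one_add_log_div_atTop)
    have hcont : ContinuousAt (fun x => x * log (x / nu1 a μb k)) (q k) :=
      continuousAt_id.mul ((continuousAt_id.div_const _).log
        (div_pos (nu1On_pos ha hS μS k) (nu1_pos ha hμb k)).ne')
    exact hcont.tendsto.comp (hcq k hk)
  rw [mul_zero, add_zero] at hbound
  filter_upwards [hc, hbound.eventually (gt_mem_nhds hKL), eventually_gt_atTop 0]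
    with L ⟨hcL, hNL⟩ hlt hL
  calc -(1 / (L : ℝ)) * log (nuProb a μb L (NL L))
      = 1 / L * -log (nuProb a μb L (NL L)) := by ring
    _ ≤ 1 / L * (∑ k ∈ S, c L k * log ((c L k / L) / nu1 a μb k) + S.card * (1 + log L)) :=
        mul_le_mul_of_nonneg_left (neg_log_nuProb_le ha hμb hL hcL hNL) (by positivity)
    _ = ∑ k ∈ S, (c L k / L : ℝ) * log ((c L k / L) / nu1 a μb k)
          + S.card * ((1 + log L) / L) := by
        rw [mul_add, Finset.mul_sum]
        congr 1
        · exact Finset.sum_congr rfl fun k _ => by ring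
        · ring
    _ < ε := hlt

lemma tendsto_neg_log_nuProb_div {a : ℕ × ℕ → ℝ} (ha : ∀ k, 0 < a k) {ρ : ℝ × ℝ}
    (hρ1 : 0 < ρ.1) (hρ2 : 0 < ρ.2) {NL : ℕ → ℕ × ℕ}
    (hNL : Tendsto (fun L : ℕ => (((NL L).1 : ℝ) / L, ((NL L).2 : ℝ) / L)) atTop (𝓝 ρ))
    {μb : ℝ × ℝ} (hμbD : μb ∈ Dmu a)
    (hmax : ∀ μ ∈ Dmu a, dotR ρ μ - press a μ ≤ dotR ρ μb - press a μb) :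
    Tendsto (fun L : ℕ => -(1 / (L : ℝ)) * log (nuProb a μb L (NL L))) atTop (𝓝 0) := by
  have hμb := summable_zsummand_of_mem_Dmu (fun k => (ha k).le) hμbD
  refine tendsto_order.2 ⟨fun b hb => ?_, fun ε hε => eventually_neg_log_nuProb_div_lt ha hρ1
    hρ2 hNL hμb (fun μ hμ => dotR_sub_press_le_of_summable ha hmax hμ) hε⟩
  filter_upwards [eventually_gt_atTop 0] with L hL
  have hlog := log_nonpos (nuProb_pos ha hμb hL _).le (nuProb_le_one ha hμb L (NL L))
  have hL' : (0 : ℝ) ≤ 1 / L := by positivity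
  nlinarith

theorem statement12_general (w : ℝ × ℝ → ℝ)
    (hpos : ∀ x : ℝ × ℝ, 0 ≤ x.1 → 0 ≤ x.2 → 0 < w x)
    (ρ : ℝ × ℝ) (hρ1 : 0 < ρ.1) (hρ2 : 0 < ρ.2)
    (NL : ℕ → ℕ × ℕ)
    (hNL : Tendsto (fun L : ℕ => ((((NL L).1 : ℝ) / L), (((NL L).2 : ℝ) / L))) atTop (𝓝 ρ))
    (μb : ℝ × ℝ) (hμbD : μb ∈ Dmu (wN w))
    (hμbMax : ∀ μ ∈ Dmu (wN w),
      dotR ρ μ - press (wN w) μ ≤ dotR ρ μb - press (wN w) μb) :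
    Tendsto (fun L : ℕ => (1 / (L : ℝ)) * relEnt (wN w) μb L (NL L)) atTop (𝓝 0) ∧
    Tendsto (fun L : ℕ => -(1 / (L : ℝ)) * Real.log (nuProb (wN w) μb L (NL L)))
      atTop (𝓝 0) := by
  have ha : ∀ k, 0 < wN w k := fun k => hpos _ k.1.cast_nonneg k.2.cast_nonneg
  have hμb := summable_zsummand_of_mem_Dmu (fun k => (ha k).le) hμbD
  have hlim := tendsto_neg_log_nuProb_div ha hρ1 hρ2 hNL hμbD hμbMax
  refine ⟨hlim.congr' ?_, hlim⟩
  filter_upwards [eventually_gt_atTop 0] with L hL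
  rw [relEnt_eq_neg_log_nuProb ha hμb hL]
  ring

/-- **equivalence of ensembles.** Under the regularity assumptions on `w`,
for `N_L/L → ρ ∈ (0,∞)²` and `μ̄ = M̄(ρ)` the unique maximizer of `μ ↦ ρ·μ - p(μ)` on
`D_μ`, the specific relative entropy `(1/L) H(π_{L,N_L}|ν^L_μ̄)` tends to `0`;
equivalently `-(1/L) log ν^L_μ̄({Σ_L = N_L}) → 0`. -/
theorem statement12 (w : ℝ × ℝ → ℝ)
    (hpos : ∀ x : ℝ × ℝ, 0 ≤ x.1 → 0 ≤ x.2 → 0 < w x)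
    (hC1 : ContDiffOn ℝ 1 w (Ici (0 : ℝ) ×ˢ Ici (0 : ℝ)))
    (hexp : ExpBounded (wN w))
    (hreg : RegularTail w)
    (ρ : ℝ × ℝ) (hρ1 : 0 < ρ.1) (hρ2 : 0 < ρ.2)
    (NL : ℕ → ℕ × ℕ)
    (hNL : Tendsto (fun L : ℕ => ((((NL L).1 : ℝ) / L), (((NL L).2 : ℝ) / L))) atTop (𝓝 ρ))
    (μb : ℝ × ℝ) (hμbD : μb ∈ Dmu (wN w))
    (hμbMax : ∀ μ ∈ Dmu (wN w),
      dotR ρ μ - press (wN w) μ ≤ dotR ρ μb - press (wN w) μb)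
    (hμbUniq : ∀ μ' ∈ Dmu (wN w),
      (∀ μ ∈ Dmu (wN w), dotR ρ μ - press (wN w) μ ≤ dotR ρ μ' - press (wN w) μ') →
      μ' = μb) :
    Tendsto (fun L : ℕ => (1 / (L : ℝ)) * relEnt (wN w) μb L (NL L)) atTop (𝓝 0) ∧
    Tendsto (fun L : ℕ => -(1 / (L : ℝ)) * Real.log (nuProb (wN w) μb L (NL L)))
      atTop (𝓝 0) :=
  statement12_general w hpos ρ hρ1 hρ2 NL hNL μb hμbD hμbMax
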